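/- Let Γ be a vertex-transitive finite simple graph with n vertices, let C be a clique of Γ, and let A be an independent set of Γ such that |C|·|A| = n. Then the clique number of Γ equals |C| and the independence number of Γ equals |A|. -/

import Mathlib

def SimpleGraph.IsIndepSet' {V : Type*} (G : SimpleGraph V) (A : Set V) : Prop :=
  A.Pairwise fun a b => ¬ G.Adj a b

noncomputable def SimpleGraph.indepNum' {V : Type*} (G : SimpleGraph V) : ℕ :=
  sSup {n | ∃ s : Finset V, s.card = n ∧ G.IsIndepSet' ↑s}

/-!
Clique–coclique bound. Count the pairs `(e, k)` of an automorphism `e` and a vertex `k ∈ K` of a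
clique with `e k ∈ I`, an independent set. The clique `e '' K` meets `I` in at most one vertex, so
there are at most `|Aut Γ|` such pairs; by transitivity the fibres of `e ↦ e k` all have size
`|Aut Γ| / n`, so each `k` lies in exactly `|I| |Aut Γ| / n` of them. Hence `|K| |I| ≤ n`, and when
`|C| |A| = n` no clique beats `C` and no independent set beats `A`.
-/

open Finset MulAction

section TransitiveAction

variable {G X : Type*} [Group G] [Fintype G] [MulAction G X] [IsPretransitive G X]
  [DecidableEq X]

theorem MulAction.card_filter_smul_eq_eq (x a b : X) :
    #{g : G | g • x = a} = #{g : G | g • x = b} := by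
  obtain ⟨h, rfl⟩ := exists_smul_eq G a b
  refine card_nbij' (h * ·) (h⁻¹ * ·) ?_ ?_ ?_ ?_ <;> intro g hg <;> simp_all [mul_smul]

theorem MulAction.card_mul_card_filter_smul_mem [Fintype X] (x : X) (s : Finset X) :
    Fintype.card X * #{g : G | g • x ∈ s} = #s * Fintype.card G := by
  have hG : Fintype.card G = #{g : G | g • x ∈ univ} := by simp
  simp_rw [hG, ← sum_card_fiberwise_eq_card_filter, fun a => card_filter_smul_eq_eq (G := G) x a x,
    sum_const, smul_eq_mul, card_univ]
  ring

end TransitiveAction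

namespace SimpleGraph

variable {V : Type*} {Γ : SimpleGraph V}

theorem isIndepSet'_iff {s : Set V} : Γ.IsIndepSet' s ↔ Γ.IsIndepSet s := Iff.rfl

theorem indepNum'_eq_indepNum : Γ.indepNum' = Γ.indepNum := by
  simp only [indepNum', indepNum, isNIndepSet_iff, isIndepSet'_iff, and_comm]

instance Iso.finite [Finite V] : Finite (Γ ≃g Γ) :=
  .of_injective _ RelIso.toEquiv_injective

theorem card_filter_map_mem_le_one (e : Γ ≃g Γ) {K I : Finset V} (hK : Γ.IsClique ↑K)
    (hI : Γ.IsIndepSet ↑I) [DecidablePred (e · ∈ I)] : #{k ∈ K | e k ∈ I} ≤ 1 := by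
  refine card_le_one.mpr fun k hk l hl => by_contra fun hkl => ?_
  simp only [mem_filter] at hk hl
  exact hI hk.2 hl.2 (e.injective.ne hkl) (e.map_adj_iff.mpr (hK hk.1 hl.1 hkl))

theorem IsClique.card_mul_card_le [Fintype V] [IsPretransitive (Γ ≃g Γ) V] {K I : Finset V}
    (hK : Γ.IsClique ↑K) (hI : Γ.IsIndepSet ↑I) : #K * #I ≤ Fintype.card V := by
  classical
  have := Fintype.ofFinite (Γ ≃g Γ)
  refine Nat.le_of_mul_le_mul_right ?_ (Fintype.card_pos (α := Γ ≃g Γ))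
  calc #K * #I * Fintype.card (Γ ≃g Γ)
      = ∑ k ∈ K, Fintype.card V * #{e : Γ ≃g Γ | e • k ∈ I} := by
        simp_rw [card_mul_card_filter_smul_mem, sum_const, smul_eq_mul, mul_assoc]
    _ = Fintype.card V * ∑ e : Γ ≃g Γ, #{k ∈ K | e k ∈ I} := by
        simp only [← mul_sum, card_filter, RelIso.smul_def]
        rw [sum_comm]
    _ ≤ Fintype.card V * Fintype.card (Γ ≃g Γ) := by
        gcongr
        exact (sum_le_sum fun e _ => card_filter_map_mem_le_one e hK hI).trans (by simp)

end SimpleGraph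

theorem Nat.le_of_mul_le_of_mul_eq {a b c n : ℕ} (ha : a ≤ n) (h : a * b ≤ n) (hc : c * b = n) :
    a ≤ c := by
  rcases Nat.eq_zero_or_pos b with rfl | hb
  · omega
  · exact Nat.le_of_mul_le_mul_right (hc ▸ h) hb

open SimpleGraph in
/-- In a vertex-transitive graph with `n` vertices, a clique `C` and an independent
set `A` with `|C||A| = n` realize the clique number and the independence number. -/
theorem stmt9 {V : Type*} [Fintype V] (Γ : SimpleGraph V)
    (hvt : ∀ a b : V, ∃ e : Γ ≃g Γ, e a = b)
    (C A : Finset V) (hC : Γ.IsClique ↑C) (hA : Γ.IsIndepSet' ↑A)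
    (hcard : C.card * A.card = Fintype.card V) :
    Γ.cliqueNum = C.card ∧ Γ.indepNum' = A.card := by
  have : IsPretransitive (Γ ≃g Γ) V := ⟨hvt⟩
  rw [isIndepSet'_iff] at hA
  rw [indepNum'_eq_indepNum]
  obtain ⟨K, hK⟩ := Γ.exists_isNClique_cliqueNum
  obtain ⟨I, hI⟩ := Γ.exists_isNIndepSet_indepNum
  constructor
  · refine le_antisymm ?_ hC.card_le_cliqueNum
    rw [← hK.card_eq]
    exact Nat.le_of_mul_le_of_mul_eq (card_le_univ K) (hK.isClique.card_mul_card_le hA) hcard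
  · refine le_antisymm ?_ hA.card_le_indepNum
    rw [← hI.card_eq]
    refine Nat.le_of_mul_le_of_mul_eq (card_le_univ I) ?_ (by rw [mul_comm, hcard])
    rw [mul_comm]
    exact hC.card_mul_card_le hI.isIndepSet
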